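/- Let A ⋊^σ G be a skew category algebra (all α(s,t) = 1) over a small category G with finitely many objects, where σ is a functor from G to rings. Let R be a congruence relation on G contained in the kernel of σ (i.e., R-equivalent morphisms have equal σ). If I is the twosided ideal generated by an element Σ_{s∈G} a_s u_s with a_s = 0 whenever s is not R-equivalent to an identity morphism and Σ_{s∈[e]} a_s = 0 for every object e, then A ∩ I = {0}. -/

import Mathlib

/-!
Fix a representative of every `R`-class of morphisms and let `π = classCollapse` move each term
`a u_s` to `a u_{s̄}`, `s̄` the representative of `s`; this realises the projection onto the skew
category algebra of `G/R` inside `A ⋊^σ G`. Since `R` is a congruence and `σ` is constant on its classes,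
`π(r z) = π(r π(z))` and `π(z r) = π(π(z) r)`, which only needs checking on monomials. So `ker π`
is a two-sided ideal; the generator lies in it because its coefficients sum to zero over each
class, hence `I ⊆ ker π`. Finally `π` is injective on `A`: an identity is the only identity in
its class.
-/

open CategoryTheory

/-- The type of morphisms of a category `G`, bundled with domain and codomain. -/
abbrev CMor (G : Type*) [Category G] := Σ e f : G, e ⟶ f

/-- Transport along an equality of objects, as a ring homomorphism. -/
def castRH {G : Type*} (A : G → Type*) [∀ e, Ring (A e)]
    {e f : G} (h : e = f) : A e →+* A f := by subst h; exact RingHom.id _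

/-- The carrier of the category crossed product `A ⋊_α^σ G`: finitely supported
formal sums `Σ_s a_s u_s` with `a_s ∈ A_{c(s)}`. -/
abbrev CP {G : Type*} [Category G] (A : G → Type*) [∀ e, Ring (A e)] :=
  Π₀ p : CMor G, A p.2.1

open Classical in
/-- The multiplication of the category crossed product:
`(a u_s)(b u_t) = a σ_s(b) α(s,t) u_{st}` when `d(s) = c(t)`, else `0`. -/
noncomputable def catMul {G : Type*} [Category G] {A : G → Type*} [∀ e, Ring (A e)]
    (σ : ∀ e f : G, (e ⟶ f) → (A e →+* A f))
    (α : ∀ e f g : G, (f ⟶ g) → (e ⟶ f) → A g)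
    (x y : CP A) : CP A :=
  x.sum fun p a => y.sum fun q b =>
    if h : q.2.1 = p.1 then
      DFinsupp.single (⟨q.1, p.2.1, (q.2.2 ≫ eqToHom h) ≫ p.2.2⟩ : CMor G)
        (a * σ p.1 p.2.1 p.2.2 (castRH A h b) * α q.1 p.1 p.2.1 p.2.2 (q.2.2 ≫ eqToHom h))
    else 0

open Classical in
/-- `a u_s`, the formal sum supported on a single morphism. -/
noncomputable def catSingle {G : Type*} [Category G] {A : G → Type*} [∀ e, Ring (A e)]
    (p : CMor G) (a : A p.2.1) : CP A := DFinsupp.single p a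

/-- `I` is a twosided ideal of the category crossed product `A ⋊_α^σ G`. -/
def IsCrossedIdeal {G : Type*} [Category G] {A : G → Type*} [∀ e, Ring (A e)]
    (σ : ∀ e f : G, (e ⟶ f) → (A e →+* A f))
    (α : ∀ e f g : G, (f ⟶ g) → (e ⟶ f) → A g)
    (I : Set (CP A)) : Prop :=
  (0 : CP A) ∈ I ∧ (∀ x y, x ∈ I → y ∈ I → x + y ∈ I) ∧ (∀ x, x ∈ I → -x ∈ I) ∧
    ∀ x r, x ∈ I → catMul σ α r x ∈ I ∧ catMul σ α x r ∈ I

open scoped Classical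

section Representatives

variable {G : Type*} [Category G] (r : HomRel G)

noncomputable def classRep {e f : G} (s : e ⟶ f) : e ⟶ f :=
  (Quotient.functor r).preimage ((Quotient.functor r).map s)

@[simp]
lemma functor_map_classRep {e f : G} (s : e ⟶ f) :
    (Quotient.functor r).map (classRep r s) = (Quotient.functor r).map s :=
  Functor.map_preimage _ _

lemma classRep_eq_classRep_iff {e f : G} {s t : e ⟶ f} :
    classRep r s = classRep r t ↔ (Quotient.functor r).map s = (Quotient.functor r).map t :=
  ⟨fun h => by rw [← functor_map_classRep r s, h, functor_map_classRep],
    fun h => by rw [classRep, h, classRep]⟩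

end Representatives

section CrossedProduct

variable {G : Type*} [Category G] {A : G → Type*} [∀ e, Ring (A e)]
  (σ : ∀ e f : G, (e ⟶ f) → (A e →+* A f)) (α : ∀ e f g : G, (f ⟶ g) → (e ⟶ f) → A g)

lemma catMul_add_left (x x' y : CP A) :
    catMul σ α (x + x') y = catMul σ α x y + catMul σ α x' y := by
  unfold catMul
  refine DFinsupp.sum_add_index (fun p => ?_) (fun p a a' => ?_)
  · exact DFinsupp.sum_eq_zero fun q => by split <;> simp
  · rw [← DFinsupp.sum_add]
    refine Finset.sum_congr rfl fun q _ => ?_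
    dsimp only
    split <;> simp [add_mul]

lemma catMul_add_right (x y y' : CP A) :
    catMul σ α x (y + y') = catMul σ α x y + catMul σ α x y' := by
  unfold catMul
  rw [← DFinsupp.sum_add]
  refine Finset.sum_congr rfl fun p _ => ?_
  refine DFinsupp.sum_add_index (fun q => ?_) (fun q b b' => ?_)
  · split <;> simp
  · split <;> simp [mul_add, add_mul]

noncomputable def catMulHom : CP A →+ CP A →+ CP A :=
  AddMonoidHom.mk' (fun x => AddMonoidHom.mk' (catMul σ α x) (catMul_add_right σ α x))
    fun x x' => AddMonoidHom.ext fun y => catMul_add_left σ α x x' y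

@[simp]
lemma catMulHom_apply (x y : CP A) : catMulHom σ α x y = catMul σ α x y := rfl

lemma catMul_single_single (p q : CMor G) (a : A p.2.1) (b : A q.2.1) :
    catMul σ α (DFinsupp.single p a) (DFinsupp.single q b) =
      if h : q.2.1 = p.1 then
        DFinsupp.single (⟨q.1, p.2.1, (q.2.2 ≫ eqToHom h) ≫ p.2.2⟩ : CMor G)
          (a * σ p.1 p.2.1 p.2.2 (castRH A h b) * α q.1 p.1 p.2.1 p.2.2 (q.2.2 ≫ eqToHom h))
      else 0 := by
  unfold catMul
  rw [DFinsupp.sum_single_index, DFinsupp.sum_single_index]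
  · split <;> simp
  · exact DFinsupp.sum_eq_zero fun q => by split <;> simp

end CrossedProduct

section Collapse

variable {G : Type*} [Category G] {A : G → Type*} [∀ e, Ring (A e)] (r : HomRel G)

variable (A) in
noncomputable def classCollapse : CP A →+ CP A :=
  DFinsupp.sumAddHom fun p =>
    DFinsupp.singleAddHom (fun p : CMor G => A p.2.1) ⟨p.1, p.2.1, classRep r p.2.2⟩

lemma classCollapse_single (p : CMor G) (a : A p.2.1) :
    classCollapse A r (DFinsupp.single p a) =
      DFinsupp.single (⟨p.1, p.2.1, classRep r p.2.2⟩ : CMor G) a :=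
  DFinsupp.sumAddHom_single _ _ _

lemma finite_support_homComponent (z : CP A) (e f : G) :
    (Function.support (M := A f) fun s : e ⟶ f => z ⟨e, f, s⟩).Finite :=
  (z.support.finite_toSet.preimage (f := fun s : e ⟶ f => (⟨e, f, s⟩ : CMor G))
    fun s _ t _ h => by simpa using h).subset fun s hs => by simpa using hs

lemma single_mk_apply_mk {e f : G} (m s : e ⟶ f) (a : A f) :
    (DFinsupp.single ⟨e, f, m⟩ a : CP A) ⟨e, f, s⟩ = if m = s then a else 0 := by
  split_ifs with h
  · subst h; exact DFinsupp.single_eq_same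
  · exact DFinsupp.single_eq_of_ne (by simpa using Ne.symm h)

lemma single_apply_mk_of_ne {e f : G} (p : CMor G) (a : A p.2.1) (s : e ⟶ f)
    (h : ¬(p.1 = e ∧ p.2.1 = f)) : (DFinsupp.single p a : CP A) ⟨e, f, s⟩ = 0 :=
  DFinsupp.single_eq_of_ne fun hp => h (by subst hp; simp)

lemma classCollapse_apply (z : CP A) {e f : G} (t : e ⟶ f) :
    classCollapse A r z ⟨e, f, t⟩ = ∑ᶠ s ∈ classRep r ⁻¹' {t}, (z ⟨e, f, s⟩ : A f) := by
  induction z using DFinsupp.induction with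
  | h0 => simp
  | ha p a z _ _ ih =>
    rw [map_add, DFinsupp.add_apply, ih, classCollapse_single]
    simp only [DFinsupp.add_apply]
    rw [finsum_mem_add_distrib' ((finite_support_homComponent _ e f).inter_of_right _)
      ((finite_support_homComponent _ e f).inter_of_right _)]
    congr 1
    obtain ⟨pd, pc, m⟩ := p
    by_cases hp : pd = e ∧ pc = f
    · obtain ⟨rfl, rfl⟩ := hp
      simp only [single_mk_apply_mk]
      rw [finsum_mem_def, finsum_eq_single _ m fun s hs => by simp [Ne.symm hs]]
      simp [Set.indicator_apply]
    · rw [single_apply_mk_of_ne _ _ _ hp]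
      exact (finsum_mem_of_eqOn_zero fun s _ => single_apply_mk_of_ne _ _ _ hp).symm

lemma eq_zero_of_classCollapse_eq_zero {y : CP A}
    (hy : ∀ p : CMor G, (∀ e : G, p ≠ ⟨e, e, 𝟙 e⟩) → y p = 0) (h : classCollapse A r y = 0) :
    y = 0 := by
  ext p
  by_cases hp : ∃ e : G, p = ⟨e, e, 𝟙 e⟩
  · obtain ⟨e, rfl⟩ := hp
    have hrep := DFinsupp.ext_iff.mp h ⟨e, e, classRep r (𝟙 e)⟩
    rw [classCollapse_apply, finsum_mem_def, finsum_eq_single _ (𝟙 e) fun s hs => ?_,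
      Set.indicator_of_mem (Set.mem_preimage.mpr (Set.mem_singleton _)),
      DFinsupp.zero_apply] at hrep
    · exact hrep
    · refine Set.indicator_apply_eq_zero.mpr fun _ => hy _ fun e' he => hs ?_
      obtain rfl : e = e' := congrArg Sigma.fst he
      simpa using he
  · push Not at hp
    exact hy p hp

end Collapse

section Ideal

variable {G : Type*} [Category G] {A : G → Type*} [∀ e, Ring (A e)]
  (σ : ∀ e f : G, (e ⟶ f) → (A e →+* A f)) (r : HomRel G)

lemma classCollapse_catMul_single_single_congr {pd pc qd qc : G} {p p' : pd ⟶ pc}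
    {q q' : qd ⟶ qc} (hp : (Quotient.functor r).map p = (Quotient.functor r).map p')
    (hq : (Quotient.functor r).map q = (Quotient.functor r).map q')
    (hσ : σ pd pc p = σ pd pc p') (a : A pc) (b : A qc) :
    classCollapse A r (catMul σ (fun _ _ _ _ _ => 1)
        (DFinsupp.single ⟨pd, pc, p⟩ a) (DFinsupp.single ⟨qd, qc, q⟩ b)) =
      classCollapse A r (catMul σ (fun _ _ _ _ _ => 1)
        (DFinsupp.single ⟨pd, pc, p'⟩ a) (DFinsupp.single ⟨qd, qc, q'⟩ b)) := by
  rw [catMul_single_single, catMul_single_single]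
  dsimp only
  by_cases h : qc = pd
  · subst h
    have hqp : classRep r ((q ≫ 𝟙 qc) ≫ p) = classRep r ((q' ≫ 𝟙 qc) ≫ p') :=
      (classRep_eq_classRep_iff r).mpr (by simp [hp, hq])
    simp only [dif_pos rfl, eqToHom_refl, classCollapse_single, hσ]
    rw [hqp]
  · rw [dif_neg h, dif_neg h]

lemma classCollapse_catMul_classCollapse_right (x y : CP A) :
    classCollapse A r (catMul σ (fun _ _ _ _ _ => 1) x (classCollapse A r y)) =
      classCollapse A r (catMul σ (fun _ _ _ _ _ => 1) x y) := by
  have h : ((catMulHom σ (fun _ _ _ _ _ => 1)).compl₂ (classCollapse A r)).compr₂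
      (classCollapse A r) = (catMulHom σ (fun _ _ _ _ _ => 1)).compr₂ (classCollapse A r) := by
    refine DFinsupp.addHom_ext fun ⟨pd, pc, p⟩ a => DFinsupp.addHom_ext fun ⟨qd, qc, q⟩ b => ?_
    simp only [AddMonoidHom.compr₂_apply, AddMonoidHom.compl₂_apply, catMulHom_apply,
      classCollapse_single]
    exact classCollapse_catMul_single_single_congr σ r rfl (by simp) rfl a b
  simpa using DFunLike.congr_fun (DFunLike.congr_fun h x) y

variable [Congruence r]

lemma rel_classRep {e f : G} (s : e ⟶ f) : r (classRep r s) s :=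
  (Quotient.functor_map_eq_iff r _ _).mp (functor_map_classRep r s)

lemma classRep_preimage_classRep {e f : G} (t : e ⟶ f) :
    classRep r ⁻¹' {classRep r t} = {s | r s t} := by
  ext s
  simp [classRep_eq_classRep_iff, Quotient.functor_map_eq_iff]

lemma classCollapse_catMul_classCollapse_left
    (hσ : ∀ {e f : G} (s t : e ⟶ f), r s t → σ e f s = σ e f t) (x y : CP A) :
    classCollapse A r (catMul σ (fun _ _ _ _ _ => 1) (classCollapse A r x) y) =
      classCollapse A r (catMul σ (fun _ _ _ _ _ => 1) x y) := by
  have h : (((catMulHom σ (fun _ _ _ _ _ => 1)).comp (classCollapse A r)).compr₂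
      (classCollapse A r)) = (catMulHom σ (fun _ _ _ _ _ => 1)).compr₂ (classCollapse A r) := by
    refine DFinsupp.addHom_ext fun ⟨pd, pc, p⟩ a => DFinsupp.addHom_ext fun ⟨qd, qc, q⟩ b => ?_
    simp only [AddMonoidHom.compr₂_apply, AddMonoidHom.comp_apply, catMulHom_apply,
      classCollapse_single]
    exact classCollapse_catMul_single_single_congr σ r (by simp) rfl
      (hσ _ _ (rel_classRep r p)) a b
  simpa using DFunLike.congr_fun (DFunLike.congr_fun h x) y

lemma isCrossedIdeal_ker_classCollapse
    (hσ : ∀ {e f : G} (s t : e ⟶ f), r s t → σ e f s = σ e f t) :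
    IsCrossedIdeal σ (fun _ _ _ _ _ => 1) {z : CP A | classCollapse A r z = 0} := by
  refine ⟨map_zero _, fun x y hx hy => ?_, fun x hx => ?_, fun x y hx => ⟨?_, ?_⟩⟩
  · simp_all
  · simp_all
  · show classCollapse A r _ = 0
    rw [← classCollapse_catMul_classCollapse_right, hx, ← catMulHom_apply,
      map_zero, map_zero]
  · show classCollapse A r _ = 0
    rw [← classCollapse_catMul_classCollapse_left σ r hσ, hx,
      ← catMulHom_apply, map_zero, AddMonoidHom.zero_apply, map_zero]

lemma classCollapse_eq_zero_of_forall_classSum_eq_zero {x : CP A}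
    (hsupp : ∀ p : CMor G, x p ≠ 0 → ∃ h : p.1 = p.2.1, r (p.2.2 ≫ eqToHom h.symm) (𝟙 p.1))
    (hsum : ∀ e : G, (∑ᶠ (s : e ⟶ e) (_ : r s (𝟙 e)), x ⟨e, e, s⟩) = 0) :
    classCollapse A r x = 0 := by
  ext ⟨e, f, t⟩
  rw [classCollapse_apply, DFinsupp.zero_apply]
  by_cases hx : ∃ s ∈ classRep r ⁻¹' {t}, (x ⟨e, f, s⟩ : A f) ≠ 0
  · obtain ⟨s, hst, hs⟩ := hx
    obtain ⟨hef, hrel⟩ := hsupp _ hs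
    dsimp only at hef
    subst hef
    have ht : t = classRep r (𝟙 e) := by
      rw [← hst, classRep_eq_classRep_iff, Quotient.functor_map_eq_iff]
      simpa using hrel
    rw [ht, classRep_preimage_classRep]
    exact hsum e
  · push Not at hx
    exact finsum_mem_of_eqOn_zero hx

end Ideal

theorem skew_category_congruence_ideal_trivial_intersection_general
    {G : Type*} [Category G] {A : G → Type*} [∀ e, Ring (A e)]
    (σ : ∀ e f : G, (e ⟶ f) → (A e →+* A f))
    (R : ∀ e f : G, (e ⟶ f) → (e ⟶ f) → Prop)
    (hRrefl : ∀ (e f : G) (s : e ⟶ f), R e f s s)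
    (hRsymm : ∀ (e f : G) (s t : e ⟶ f), R e f s t → R e f t s)
    (hRtrans : ∀ (e f : G) (s t r : e ⟶ f), R e f s t → R e f t r → R e f s r)
    (hRcomp : ∀ (e f g : G) (s s' : e ⟶ f) (t t' : f ⟶ g),
      R e f s s' → R f g t t' → R e g (s ≫ t) (s' ≫ t'))
    (hRker : ∀ (e f : G) (s t : e ⟶ f), R e f s t → σ e f s = σ e f t)
    (I : Set (CP A)) (x : CP A)
    (hImin : ∀ J : Set (CP A),
      IsCrossedIdeal σ (fun _ _ _ _ _ => 1) J → x ∈ J → I ⊆ J)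
    (hsupp : ∀ p : CMor G, x p ≠ 0 →
      ∃ h : p.1 = p.2.1, R p.1 p.1 (p.2.2 ≫ eqToHom h.symm) (𝟙 p.1))
    (hsum : ∀ e : G, (∑ᶠ (s : e ⟶ e) (_ : R e e s (𝟙 e)), x ⟨e, e, s⟩) = 0) :
    ∀ y ∈ I, (∀ p : CMor G, (∀ e : G, p ≠ ⟨e, e, 𝟙 e⟩) → y p = 0) → y = 0 := by
  intro y hyI hy
  let r : HomRel G := fun e f => R e f
  have : Congruence r :=
    { equivalence := ⟨hRrefl _ _, hRsymm _ _ _ _, hRtrans _ _ _ _ _⟩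
      comp_left := fun f _ _ h => hRcomp _ _ _ _ _ _ _ (hRrefl _ _ f) h
      comp_right := fun g h => hRcomp _ _ _ _ _ _ _ h (hRrefl _ _ g) }
  have hIker : I ⊆ {z | classCollapse A r z = 0} :=
    hImin _ (isCrossedIdeal_ker_classCollapse σ r (hRker _ _))
      (classCollapse_eq_zero_of_forall_classSum_eq_zero r hsupp hsum)
  exact eq_zero_of_classCollapse_eq_zero r hy (hIker hyI)

/-- let `A ⋊^σ G` be a skew category algebra (all `α(s,t) = 1`)
with `σ` a functor, and let `R` be a congruence relation on `G` contained in
`ker σ`. If `I` is the twosided ideal generated by an element `Σ a_s u_s` with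
`a_s = 0` whenever `s` is not `R`-equivalent to an identity morphism and
`Σ_{s ∈ [e]} a_s = 0` for every object `e`, then `A ∩ I = {0}`. -/
theorem skew_category_congruence_ideal_trivial_intersection
    {G : Type*} [Category G] [Finite G] {A : G → Type*} [∀ e, Ring (A e)]
    (σ : ∀ e f : G, (e ⟶ f) → (A e →+* A f))
    (hσ1 : ∀ e : G, σ e e (𝟙 e) = RingHom.id (A e))
    (hσcomp : ∀ (e f g : G) (s : e ⟶ f) (t : f ⟶ g),
      σ e g (s ≫ t) = (σ f g t).comp (σ e f s))
    (R : ∀ e f : G, (e ⟶ f) → (e ⟶ f) → Prop)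
    (hRrefl : ∀ (e f : G) (s : e ⟶ f), R e f s s)
    (hRsymm : ∀ (e f : G) (s t : e ⟶ f), R e f s t → R e f t s)
    (hRtrans : ∀ (e f : G) (s t r : e ⟶ f), R e f s t → R e f t r → R e f s r)
    (hRcomp : ∀ (e f g : G) (s s' : e ⟶ f) (t t' : f ⟶ g),
      R e f s s' → R f g t t' → R e g (s ≫ t) (s' ≫ t'))
    (hRker : ∀ (e f : G) (s t : e ⟶ f), R e f s t → σ e f s = σ e f t)
    (I : Set (CP A)) (x : CP A)
    (hI : IsCrossedIdeal σ (fun _ _ _ _ _ => 1) I) (hxI : x ∈ I)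
    (hImin : ∀ J : Set (CP A),
      IsCrossedIdeal σ (fun _ _ _ _ _ => 1) J → x ∈ J → I ⊆ J)
    (hsupp : ∀ p : CMor G, x p ≠ 0 →
      ∃ h : p.1 = p.2.1, R p.1 p.1 (p.2.2 ≫ eqToHom h.symm) (𝟙 p.1))
    (hsum : ∀ e : G, (∑ᶠ (s : e ⟶ e) (_ : R e e s (𝟙 e)), x ⟨e, e, s⟩) = 0) :
    ∀ y ∈ I, (∀ p : CMor G, (∀ e : G, p ≠ ⟨e, e, 𝟙 e⟩) → y p = 0) → y = 0 :=
  skew_category_congruence_ideal_trivial_intersection_general σ R hRrefl hRsymm hRtrans hRcomp hRker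
    I x hImin hsupp hsum
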